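/- arXiv:1209.5783 — 3 statements merged into one kernel-verified Lean document; each statement's English description precedes it below -/
import Mathlib

section
/- Let X and Y be topological spaces on which groups G and H act by homeomorphisms, let Φ : X → Y be a homeomorphism, and for each x ∈ X let α_x : G → H be a group isomorphism with Φ(γ·x) = α_x(γ)·Φ(x) for all x ∈ X and γ ∈ G. If x ∈ X does not belong to the total fixed point set F_X, then the family α is constant along the orbit of x: α_{γ·x} = α_x for all γ ∈ G. -/
/-!
Equivariance makes `Φ` carry the stabilizer of `x` onto that of `Φ x` via `α x`, so `Φ x` has
trivial stabilizer too. Computing `Φ ((δ * γ) • x)` once directly and once through `γ • x` gives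
`α (γ • x) δ * α x γ = α x (δ * γ)`, and cancelling `α x γ` yields `α (γ • x) δ = α x δ`.
-/

namespace MulAction

variable {G H X Y : Type*} [Group G] [Group H] [MulAction G X] [MulAction H Y]

theorem stabilizer_eq_bot_iff {x : X} : stabilizer G x = ⊥ ↔ ∀ g : G, g • x = x → g = 1 :=
  Subgroup.eq_bot_iff_forall _

theorem smul_left_injective_of_stabilizer_eq_bot {x : X} (hx : stabilizer G x = ⊥) :
    Function.Injective (· • x : G → X) := by
  intro g g' hgg'
  have hmem : g'⁻¹ * g ∈ stabilizer G x := by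
    rw [mem_stabilizer_iff, mul_smul, inv_smul_eq_iff]
    exact hgg'
  rw [hx, Subgroup.mem_bot, inv_mul_eq_one] at hmem
  exact hmem.symm

theorem stabilizer_apply_eq_map_of_injective {f : X → Y} (hf : Function.Injective f)
    (e : G ≃* H) {x : X} (he : ∀ g : G, f (g • x) = e g • f x) :
    stabilizer H (f x) = (stabilizer G x).map e.toMonoidHom := by
  ext h
  rw [Subgroup.mem_map_equiv, mem_stabilizer_iff, mem_stabilizer_iff, ← hf.eq_iff, he,
    MulEquiv.apply_symm_apply]

end MulAction

theorem alpha_constant_on_orbit_of_nonfixed_general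
    {X Y G H : Type*} [TopologicalSpace X] [TopologicalSpace Y]
    [Group G] [Group H] [MulAction G X] [MulAction H Y]
    (Φ : X ≃ₜ Y) (α : X → (G ≃* H))
    (hequiv : ∀ (x : X) (γ : G), Φ (γ • x) = α x γ • Φ x)
    (x : X) (hx : x ∉ {x : X | ∃ γ : G, γ ≠ 1 ∧ γ • x = x}) :
    ∀ γ : G, α (γ • x) = α x := by
  have hfree : MulAction.stabilizer G x = ⊥ :=
    MulAction.stabilizer_eq_bot_iff.mpr fun g hg => by_contra fun hg1 => hx ⟨g, hg1, hg⟩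
  have hfree' : MulAction.stabilizer H (Φ x) = ⊥ := by
    rw [MulAction.stabilizer_apply_eq_map_of_injective Φ.injective (α x) (hequiv x), hfree,
      Subgroup.map_bot]
  intro γ
  ext δ
  have hcocycle : α (γ • x) δ * α x γ = α x δ * α x γ := by
    rw [← map_mul]
    apply MulAction.smul_left_injective_of_stabilizer_eq_bot hfree'
    simp only [mul_smul, ← hequiv]
  exact mul_right_cancel hcocycle

/-- If `x` is not in the total fixed point set, then the family `α` is
constant along the orbit of `x`. -/
theorem alpha_constant_on_orbit_of_nonfixed
    {X Y G H : Type*} [TopologicalSpace X] [TopologicalSpace Y]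
    [Group G] [Group H] [MulAction G X] [MulAction H Y]
    [ContinuousConstSMul G X] [ContinuousConstSMul H Y]
    (Φ : X ≃ₜ Y) (α : X → (G ≃* H))
    (hequiv : ∀ (x : X) (γ : G), Φ (γ • x) = α x γ • Φ x)
    (x : X) (hx : x ∉ {x : X | ∃ γ : G, γ ≠ 1 ∧ γ • x = x}) :
    ∀ γ : G, α (γ • x) = α x :=
  alpha_constant_on_orbit_of_nonfixed_general Φ α hequiv x hx
end

section
/- Let g ≥ 2 be an integer and let A be the (2g)×(2g) integer matrix given in block form by A = [[J, J − I],[J − I, J]], where J is the g×g matrix all of whose entries are 1 and I is the g×g identity matrix. Then the cokernel ℤ^{2g} / (I_{2g} − A)ℤ^{2g} of the endomorphism of ℤ^{2g} given by multiplication by I_{2g} − A is isomorphic, as an abelian group, to ℤ^g × ℤ/(g−1)ℤ. -/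
open Matrix

/-- The `(2g)×(2g)` integer matrix `[[J, J-I],[J-I, J]]`, where `J` is the `g×g`
all-ones matrix and `I` the `g×g` identity matrix. -/
def boundaryMatrix (g : ℕ) : Matrix (Fin g ⊕ Fin g) (Fin g ⊕ Fin g) ℤ :=
  Matrix.fromBlocks (Matrix.of fun _ _ => 1)
    ((Matrix.of fun _ _ => 1) - 1)
    ((Matrix.of fun _ _ => 1) - 1)
    (Matrix.of fun _ _ => 1)

/-!
Writing `s i = x (inl i) + x (inr i)`, both halves of `(1 - A) x` equal `s` minus the
constant `∑ j, s j`, so their entries sum to `-(g - 1) ∑ j, s j`. Conversely every vector with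
equal halves and half-sum divisible by `g - 1` is of this form. Hence the image of `1 - A` is
exactly the kernel of the surjection `v ↦ (v_top - v_bottom, ∑ v_top mod (g - 1))` onto
`ℤ^g × ℤ/(g - 1)`.
-/

lemma one_sub_boundaryMatrix_mulVec_apply (g : ℕ) (x : Fin g ⊕ Fin g → ℤ)
    (p : Fin g ⊕ Fin g) :
    ((1 - boundaryMatrix g) *ᵥ x) p =
      Sum.elim (fun i => x (.inl i) + x (.inr i)) (fun i => x (.inl i) + x (.inr i)) p
        - ∑ j, (x (.inl j) + x (.inr j)) := by
  obtain i | i := p <;>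
  · simp only [mulVec, dotProduct, Fintype.sum_sum_type, Matrix.sub_apply, boundaryMatrix,
      fromBlocks_apply₁₁, fromBlocks_apply₁₂, fromBlocks_apply₂₁, fromBlocks_apply₂₂, of_apply,
      one_apply, Sum.elim_inl, Sum.elim_inr, sub_mul, one_mul, ite_mul, zero_mul,
      Finset.sum_sub_distrib, Finset.sum_ite_eq, Finset.mem_univ, if_true, Finset.sum_add_distrib]
    ring

lemma mem_range_one_sub_boundaryMatrix_iff (g : ℕ) (v : Fin g ⊕ Fin g → ℤ) :
    v ∈ LinearMap.range (toLin' (1 - boundaryMatrix g)) ↔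
      (∀ i, v (.inl i) = v (.inr i)) ∧ ((g : ℤ) - 1) ∣ ∑ i, v (.inl i) := by
  simp only [LinearMap.mem_range, toLin'_apply]
  constructor
  · rintro ⟨x, rfl⟩
    refine ⟨fun i => ?_, ⟨-∑ j, (x (.inl j) + x (.inr j)), ?_⟩⟩
    · simp only [one_sub_boundaryMatrix_mulVec_apply, Sum.elim_inl, Sum.elim_inr]
    · simp only [one_sub_boundaryMatrix_mulVec_apply, Sum.elim_inl, Finset.sum_sub_distrib,
        Finset.sum_const, Finset.card_univ, Fintype.card_fin, nsmul_eq_mul]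
      ring
  · rintro ⟨hv, k, hk⟩
    -- With `y = (v_top - k, 0)` the pair sums total `(g - 1) k - g k = -k`.
    refine ⟨Sum.elim (fun i => v (.inl i) - k) 0, funext fun p => ?_⟩
    have hsum : ∑ j : Fin g, (v (.inl j) - k + 0) = -k := by
      simp only [add_zero, Finset.sum_sub_distrib, hk, Finset.sum_const, Finset.card_univ,
        Fintype.card_fin, nsmul_eq_mul]
      ring
    obtain i | i := p
    · simp only [one_sub_boundaryMatrix_mulVec_apply, Sum.elim_inl, Sum.elim_inr, Pi.zero_apply,
        hsum]
      ring
    · simp only [one_sub_boundaryMatrix_mulVec_apply, Sum.elim_inl, Sum.elim_inr, Pi.zero_apply,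
        hsum, hv i]
      ring

def boundaryCokernelMap (g : ℕ) : (Fin g ⊕ Fin g → ℤ) →ₗ[ℤ] (Fin g → ℤ) × ZMod (g - 1) :=
  AddMonoidHom.toIntLinearMap
    { toFun := fun v => (fun i => v (.inl i) - v (.inr i), ((∑ i, v (.inl i) : ℤ) : ZMod (g - 1)))
      map_zero' := by ext <;> simp
      map_add' := fun v w => by
        ext <;> simp [Finset.sum_add_distrib]
        ring }

lemma ker_boundaryCokernelMap {g : ℕ} (hg : 1 ≤ g) :
    LinearMap.ker (boundaryCokernelMap g) = LinearMap.range (toLin' (1 - boundaryMatrix g)) := by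
  ext v
  have hcast : ((g - 1 : ℕ) : ℤ) = (g : ℤ) - 1 := by omega
  rw [LinearMap.mem_ker, mem_range_one_sub_boundaryMatrix_iff, ← hcast,
    ← ZMod.intCast_zmod_eq_zero_iff_dvd]
  simp only [boundaryCokernelMap, AddMonoidHom.coe_toIntLinearMap, AddMonoidHom.coe_mk,
    ZeroHom.coe_mk, Prod.mk_eq_zero, funext_iff, Pi.zero_apply, sub_eq_zero]

lemma boundaryCokernelMap_surjective {g : ℕ} (hg : 1 ≤ g) :
    Function.Surjective (boundaryCokernelMap g) := by
  rintro ⟨w, c⟩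
  obtain ⟨m, rfl⟩ := ZMod.intCast_surjective c
  let u : Fin g → ℤ := Pi.single ⟨0, hg⟩ (m - ∑ j, w j)
  refine ⟨Sum.elim (w + u) u, Prod.ext (funext fun i => ?_) ?_⟩
  · simp [boundaryCokernelMap]
  · simp only [boundaryCokernelMap, AddMonoidHom.coe_toIntLinearMap, AddMonoidHom.coe_mk,
      ZeroHom.coe_mk, Sum.elim_inl, Pi.add_apply, Finset.sum_add_distrib, u,
      Finset.sum_pi_single', Finset.mem_univ, if_true, add_sub_cancel]

/-- The cokernel `ℤ^{2g} / (I - A)ℤ^{2g}` is isomorphic to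
`ℤ^g × ℤ/(g-1)ℤ`. -/
theorem cokernel_boundary_matrix (g : ℕ) (hg : 2 ≤ g) :
    Nonempty ((((Fin g ⊕ Fin g) → ℤ) ⧸
        LinearMap.range (Matrix.toLin' ((1 : Matrix (Fin g ⊕ Fin g) (Fin g ⊕ Fin g) ℤ)
          - boundaryMatrix g)))
      ≃+ ((Fin g → ℤ) × ZMod (g - 1))) := by
  have hg₁ : 1 ≤ g := by omega
  exact ⟨((Submodule.quotEquivOfEq _ _ (ker_boundaryCokernelMap hg₁).symm).trans
    (LinearMap.quotKerEquivOfSurjective _ (boundaryCokernelMap_surjective hg₁))).toAddEquiv⟩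
end

section
/- Let g ≥ 2 be an integer and let A be the (2g)×(2g) integer matrix given in block form by A = [[J, J − I],[J − I, J]], where J is the g×g matrix all of whose entries are 1 and I is the g×g identity matrix. Then in the cokernel ℤ^{2g} / (I_{2g} − A)ℤ^{2g}, the class u of the all-ones vector (1, 1, …, 1) ∈ ℤ^{2g} has additive order g − 1, and the cyclic subgroup generated by u is exactly the torsion subgroup of the cokernel. -/
/-!
Writing `z = x ∘ inl + x ∘ inr`, both halves of `(I - A) x` equal `z - (∑ z) • 1`, so the image
of `I - A` consists of the vectors with equal halves whose common half lies in the image of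
`I - J`, which has index `g - 1` in `ℤ^g` (detected by the coordinate sum mod `g - 1`). Hence
`x ↦ (x ∘ inl - x ∘ inr, ∑ x ∘ inr mod (g - 1))` identifies the cokernel with `ℤ^g × ℤ/(g - 1)`,
sending the unit class to `(0, 1)`, which generates the torsion subgroup `0 × ℤ/(g - 1)`.
-/

open Matrix

theorem addOrderOf_zero_one_prod_zmod {M : Type*} [AddMonoid M] (m : ℕ) :
    addOrderOf ((0, 1) : M × ZMod m) = m := by
  rw [← AddMonoidHom.inr_apply, addOrderOf_injective _ (Prod.mk_right_injective 0),
    ZMod.addOrderOf_one]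

section Torsion
variable {M N : Type*} [AddGroup M] [AddGroup N]

theorem AddEquiv.mem_zmultiples_apply_iff (e : M ≃+ N) {u v : M} :
    e v ∈ AddSubgroup.zmultiples (e u) ↔ v ∈ AddSubgroup.zmultiples u := by
  simp only [AddSubgroup.mem_zmultiples_iff, ← map_zsmul, e.injective.eq_iff]

theorem isOfFinAddOrder_prod_zmod_iff [IsAddTorsionFree M] {m : ℕ} [NeZero m]
    (v : M × ZMod m) :
    IsOfFinAddOrder v ↔ v ∈ AddSubgroup.zmultiples ((0, 1) : M × ZMod m) := by
  rw [IsOfFinAddOrder.prod_iff, isOfFinAddOrder_iff_eq_zero, AddSubgroup.mem_zmultiples_iff]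
  constructor
  · rintro ⟨hv, -⟩
    exact ⟨v.2.val, Prod.ext (by simp [hv]) (by simp)⟩
  · rintro ⟨k, rfl⟩
    exact ⟨by simp, isOfFinAddOrder_of_finite _⟩

end Torsion

theorem natCast_self_zmod_sub_one {n : ℕ} (hn : 1 ≤ n) : (n : ZMod (n - 1)) = 1 := by
  obtain ⟨m, rfl⟩ := Nat.exists_eq_add_of_le' hn
  simp

theorem one_sub_allOnes_mulVec {ι : Type*} [Fintype ι] [DecidableEq ι] (z : ι → ℤ) :
    (1 - of fun _ _ => 1 : Matrix ι ι ℤ) *ᵥ z = fun i => z i - ∑ j, z j := by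
  rw [sub_mulVec, one_mulVec]
  ext i
  simp [mulVec, dotProduct]

def boundaryInvariant (g : ℕ) :
    ((Fin g ⊕ Fin g) → ℤ) →ₗ[ℤ] (Fin g → ℤ) × ZMod (g - 1) where
  toFun x := (fun i => x (.inl i) - x (.inr i), ((∑ i, x (.inr i) : ℤ) : ZMod (g - 1)))
  map_add' x y :=
    Prod.ext (funext fun _ => add_sub_add_comm _ _ _ _) (by simp [Finset.sum_add_distrib])
  map_smul' c x := Prod.ext (funext fun _ => (mul_sub c _ _).symm) (by simp [Finset.mul_sum])

section Boundary
variable {g : ℕ}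

@[simp]
theorem boundaryInvariant_apply (x : (Fin g ⊕ Fin g) → ℤ) :
    boundaryInvariant g x =
      (fun i => x (.inl i) - x (.inr i), ((∑ i, x (.inr i) : ℤ) : ZMod (g - 1))) := rfl

theorem one_sub_boundaryMatrix :
    1 - boundaryMatrix g =
      fromBlocks (1 - of fun _ _ => 1) (1 - of fun _ _ => 1) (1 - of fun _ _ => 1)
        (1 - of fun _ _ => 1) := by
  rw [← fromBlocks_one, boundaryMatrix, sub_eq_add_neg, fromBlocks_neg, fromBlocks_add]
  congr 1 <;> abel

theorem one_sub_boundaryMatrix_mulVec (x : Fin g ⊕ Fin g → ℤ) :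
    (1 - boundaryMatrix g) *ᵥ x =
      Sum.elim (fun i => x (.inl i) + x (.inr i) - ∑ t, x t)
        (fun i => x (.inl i) + x (.inr i) - ∑ t, x t) := by
  rw [one_sub_boundaryMatrix, fromBlocks_mulVec, ← mulVec_add, one_sub_allOnes_mulVec]
  simp [Fintype.sum_sum_type, Finset.sum_add_distrib]

theorem boundaryInvariant_one_sub_boundaryMatrix_mulVec (hg : 1 ≤ g) (x : Fin g ⊕ Fin g → ℤ) :
    boundaryInvariant g ((1 - boundaryMatrix g) *ᵥ x) = 0 := by
  have hsum : ∑ i : Fin g, (x (.inl i) + x (.inr i) - ∑ t, x t) = (1 - g) * ∑ t, x t := by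
    simp only [Fintype.sum_sum_type, Finset.sum_sub_distrib, Finset.sum_add_distrib,
      Finset.sum_const, Finset.card_univ, Fintype.card_fin, Int.nsmul_eq_mul]
    ring
  simp only [boundaryInvariant_apply, one_sub_boundaryMatrix_mulVec, Sum.elim_inl, Sum.elim_inr,
    sub_self, hsum]
  ext
  · rfl
  · push_cast
    simp [natCast_self_zmod_sub_one hg]

theorem mem_range_of_boundaryInvariant_eq_zero (hg : 1 ≤ g) {x : Fin g ⊕ Fin g → ℤ}
    (hx : boundaryInvariant g x = 0) :
    x ∈ LinearMap.range (toLin' (1 - boundaryMatrix g)) := by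
  simp only [boundaryInvariant_apply, Prod.mk_eq_zero, funext_iff, Pi.zero_apply, sub_eq_zero,
    ZMod.intCast_zmod_eq_zero_iff_dvd] at hx
  obtain ⟨hdiag, k, hk⟩ := hx
  refine ⟨Sum.elim (fun i => x (.inr i) - k) 0, ?_⟩
  have hsum : ∑ t, Sum.elim (fun i => x (.inr i) - k) (0 : Fin g → ℤ) t = -k := by
    simp only [Fintype.sum_sum_type, Sum.elim_inl, Sum.elim_inr, Finset.sum_sub_distrib, hk,
      Nat.cast_sub hg, Finset.sum_const, Finset.card_univ, Fintype.card_fin, Int.nsmul_eq_mul,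
      Pi.zero_apply, Nat.cast_one]
    ring
  ext (i | i) <;> simp only [toLin'_apply, one_sub_boundaryMatrix_mulVec, hsum] <;> simp [hdiag]

theorem ker_boundaryInvariant (hg : 1 ≤ g) :
    LinearMap.ker (boundaryInvariant g) = LinearMap.range (toLin' (1 - boundaryMatrix g)) := by
  refine le_antisymm (fun x hx => mem_range_of_boundaryInvariant_eq_zero hg hx) ?_
  rintro _ ⟨x, rfl⟩
  exact boundaryInvariant_one_sub_boundaryMatrix_mulVec hg x

theorem boundaryInvariant_one (hg : 1 ≤ g) : boundaryInvariant g (fun _ => 1) = (0, 1) := by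
  ext <;> simp [natCast_self_zmod_sub_one hg]

theorem boundaryInvariant_surjective (hg : 1 ≤ g) : Function.Surjective (boundaryInvariant g) := by
  rintro ⟨a, c⟩
  obtain ⟨k, rfl⟩ := ZMod.intCast_surjective c
  refine ⟨Sum.elim a 0 + k • fun _ => 1, ?_⟩
  rw [map_add, map_zsmul, boundaryInvariant_one hg]
  ext <;> simp

noncomputable def boundaryCokernelEquiv (hg : 1 ≤ g) :
    (((Fin g ⊕ Fin g) → ℤ) ⧸ LinearMap.range (toLin' (1 - boundaryMatrix g))) ≃ₗ[ℤ]
      (Fin g → ℤ) × ZMod (g - 1) :=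
  (Submodule.quotEquivOfEq _ _ (ker_boundaryInvariant hg).symm).trans
    ((boundaryInvariant g).quotKerEquivOfSurjective (boundaryInvariant_surjective hg))

theorem boundaryCokernelEquiv_mk (hg : 1 ≤ g) (x : Fin g ⊕ Fin g → ℤ) :
    boundaryCokernelEquiv hg (Submodule.Quotient.mk x) = boundaryInvariant g x := rfl

end Boundary

/-- In the cokernel `ℤ^{2g} / (I - A)ℤ^{2g}`, the class `u` of the
all-ones vector has additive order `g - 1`, and the cyclic subgroup it generates is
exactly the torsion subgroup. -/
theorem unit_class_generates_torsion (g : ℕ) (hg : 2 ≤ g) :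
    addOrderOf ((Submodule.Quotient.mk (fun _ => (1 : ℤ)) :
        ((Fin g ⊕ Fin g) → ℤ) ⧸
          LinearMap.range (Matrix.toLin'
            ((1 : Matrix (Fin g ⊕ Fin g) (Fin g ⊕ Fin g) ℤ) - boundaryMatrix g))))
      = g - 1 ∧
    ∀ v : ((Fin g ⊕ Fin g) → ℤ) ⧸
        LinearMap.range (Matrix.toLin'
          ((1 : Matrix (Fin g ⊕ Fin g) (Fin g ⊕ Fin g) ℤ) - boundaryMatrix g)),
      (∃ n : ℕ, 0 < n ∧ n • v = 0) ↔
        v ∈ AddSubgroup.zmultiples (Submodule.Quotient.mk (fun _ => (1 : ℤ))) := by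
  have hg₁ : 1 ≤ g := by omega
  have : NeZero (g - 1) := ⟨by omega⟩
  set e := (boundaryCokernelEquiv hg₁).toAddEquiv
  have he : e (Submodule.Quotient.mk fun _ => 1) = (0, 1) :=
    (boundaryCokernelEquiv_mk hg₁ _).trans (boundaryInvariant_one hg₁)
  refine ⟨?_, fun v => ?_⟩
  · rw [← e.addOrderOf_eq, he, addOrderOf_zero_one_prod_zmod]
  · rw [← isOfFinAddOrder_iff_nsmul_eq_zero,
      ← e.injective.isOfFinAddOrder_iff (f := e.toAddMonoidHom), isOfFinAddOrder_prod_zmod_iff, ← he]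
    exact e.mem_zmultiples_apply_iff
end
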